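/- The limiting merge loss λ₂' ↦ Δ[λ₁,π₁;λ₂',∞] is non-decreasing in λ₂' for λ₂' ≥ λ₁, where for 0 < λ₁ < ∞: Δ[λ₁,π₁;λ₂',∞] = π₁(−(λ₁/(λ₁+1))log₂((1+1/λ₁)/(1+1/λ₂')) − (1/(λ₁+1))log₂((λ₁+1)/(λ₂'+1))), and Δ[λ₁,π₁;λ₁,∞] = 0. -/

import Mathlib

/-!
Since `log (1 + 1/μ) = log (μ + 1) - log μ`, the merge loss is `π / log 2 · (P μ - P λ)` with
`P x = log (x + 1) - λ/(λ+1) · log x`. The derivative of `P` is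
`1/(x+1) - λ/((λ+1) x) = (x - λ) / ((λ+1) x (x+1))`, which is nonnegative for `x ≥ λ`.
-/

/-- Limiting merge loss `Δ[lam,pi; mu,∞]` for `0 < lam < ∞`. -/
noncomputable def deltaInf (lam pi mu : ℝ) : ℝ :=
  pi * (-(lam / (lam + 1)) * Real.logb 2 ((1 + 1 / lam) / (1 + 1 / mu))
        - 1 / (lam + 1) * Real.logb 2 ((lam + 1) / (mu + 1)))

open Real Set

noncomputable def mergeLossPotential (lam x : ℝ) : ℝ :=
  log (x + 1) - lam / (lam + 1) * log x

lemma hasDerivAt_mergeLossPotential (lam : ℝ) {x : ℝ} (hx : 0 < x) :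
    HasDerivAt (mergeLossPotential lam) ((x + 1)⁻¹ - lam / (lam + 1) * x⁻¹) x := by
  have hlog_succ : HasDerivAt (fun y ↦ log (y + 1)) (x + 1)⁻¹ x := by
    simpa using ((hasDerivAt_id x).add_const 1).log (by positivity)
  exact hlog_succ.sub ((hasDerivAt_log hx.ne').const_mul _)

lemma mergeLossPotential_monotoneOn {lam : ℝ} (hlam : 0 < lam) :
    MonotoneOn (mergeLossPotential lam) (Ici lam) := by
  have hderiv (x : ℝ) (hx : lam ≤ x) := hasDerivAt_mergeLossPotential lam (hlam.trans_le hx)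
  refine monotoneOn_of_hasDerivWithinAt_nonneg (convex_Ici lam)
    (fun x hx ↦ (hderiv x hx).continuousAt.continuousWithinAt)
    (fun x hx ↦ (hderiv x (interior_subset hx)).hasDerivWithinAt) fun x hx ↦ ?_
  rw [interior_Ici, mem_Ioi] at hx
  have hx0 : 0 < x := hlam.trans hx
  rw [sub_nonneg, ← div_eq_mul_inv, div_div, inv_eq_one_div,
    div_le_div_iff₀ (by positivity) (by positivity)]
  nlinarith

lemma deltaInf_eq_mul_sub {lam mu : ℝ} (pi : ℝ) (hlam : 0 < lam) (hmu : 0 < mu) :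
    deltaInf lam pi mu = pi / log 2 * (mergeLossPotential lam mu - mergeLossPotential lam lam) := by
  have log_one_add_inv {x : ℝ} (hx : 0 < x) : log (1 + 1 / x) = log (x + 1) - log x := by
    rw [← log_div (by positivity) hx.ne', add_div, div_self hx.ne', add_comm]
  unfold deltaInf mergeLossPotential logb
  rw [log_div (by positivity) (by positivity), log_div (by positivity) (by positivity),
    log_one_add_inv hlam, log_one_add_inv hmu]
  field_simp
  ring

/-- `mu ↦ Δ[lam₁,pi₁; mu,∞]` is non-decreasing on `[lam₁,∞)`,
and vanishes at `mu = lam₁`. -/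
theorem deltaInf_monotone (lam₁ pi₁ : ℝ) (hlam : 0 < lam₁) (hpi : 0 < pi₁) :
    (∀ a b : ℝ, lam₁ ≤ a → a ≤ b → deltaInf lam₁ pi₁ a ≤ deltaInf lam₁ pi₁ b) ∧
    deltaInf lam₁ pi₁ lam₁ = 0 := by
  refine ⟨fun a b ha hab ↦ ?_, ?_⟩
  · rw [deltaInf_eq_mul_sub pi₁ hlam (hlam.trans_le ha),
      deltaInf_eq_mul_sub pi₁ hlam (hlam.trans_le (ha.trans hab))]
    gcongr
    exact mergeLossPotential_monotoneOn hlam ha (ha.trans hab) hab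
  · rw [deltaInf_eq_mul_sub pi₁ hlam hlam, sub_self, mul_zero]
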